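/- arXiv:math-ph/0609024 — 4 statements merged into one kernel-verified Lean document; each statement's English description precedes it below -/
import Mathlib

section
/- Let c_ε > 0 and for each m ∈ ℕ set β_m = c_ε·(2/3)·(log 3/log 2)·6^m and define the probabilities P_m(n) = exp(−3β_m/2^(n+1) − c_ε·3^n)/Z_m where Z_m = Σ_{n≥0} exp(−3β_m/2^(n+1) − c_ε·3^n). Then P_m(m) → 1 as m → ∞. -/
/-!
With `L = log 3 / log 2 ∈ (1, 2)` and `3 β_m = 2 c L 6^m`, the energy gap
`f_m(n) - f_m(m)` is at least `c (L - 1) 3^m` for `n < m` and at least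
`c (2 - L) 3^m + 2 c j` for `n = m + 1 + j`. Hence, relative to the weight at `n = m`,
the `m` weights below `m` are each `≤ exp (-c (L - 1) 3^m)` and the weights above `m`
are dominated by a geometric series with total mass `O(exp (-c (2 - L) 3^m))`;
both contributions vanish as `m → ∞`, so `1 / P_m(m) → 1`.
-/

open Real Filter Topology

lemma exp_neg_div_tsum_exp_neg {ι : Type*} (E : ι → ℝ) (k : ι) :
    exp (-E k) / ∑' i, exp (-E i) = (∑' i, exp (-(E i - E k)))⁻¹ := by
  have hfactor : ∑' i, exp (-(E i - E k)) = exp (E k) * ∑' i, exp (-E i) := by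
    rw [← tsum_mul_left]
    congr with i
    rw [← exp_add]
    ring_nf
  rw [hfactor, mul_inv, ← exp_neg, div_eq_mul_inv]

section Concentration

variable {q : ℝ}

lemma summable_of_le_geometric_tail {w : ℕ → ℝ} (hw : ∀ n, 0 ≤ w n) (hq0 : 0 ≤ q)
    (hq : q < 1) {k : ℕ} {δ : ℝ} (htail : ∀ j, w (k + j) ≤ δ * q ^ j) : Summable w := by
  refine (summable_nat_add_iff k).mp <| Summable.of_nonneg_of_le (fun j => hw _) (fun j => ?_)
    ((summable_geometric_of_lt_one hq0 hq).mul_left δ)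
  rw [add_comm]
  exact htail j

lemma tsum_le_of_peak {w : ℕ → ℝ} (hw : ∀ n, 0 ≤ w n) (hq0 : 0 ≤ q) (hq : q < 1)
    {m : ℕ} {ε δ : ℝ} (hlt : ∀ n < m, w n ≤ ε) (hpeak : w m = 1)
    (hgt : ∀ j, w (m + 1 + j) ≤ δ * q ^ j) :
    ∑' n, w n ≤ m * ε + 1 + δ * (1 - q)⁻¹ := by
  have hsum := summable_of_le_geometric_tail hw hq0 hq hgt
  rw [← hsum.sum_add_tsum_nat_add (m + 1), Finset.sum_range_succ, hpeak]
  have hbelow : ∑ n ∈ Finset.range m, w n ≤ m * ε := by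
    simpa using Finset.sum_le_sum fun n hn => hlt n (Finset.mem_range.mp hn)
  have habove : ∑' j, w (j + (m + 1)) ≤ δ * (1 - q)⁻¹ := by
    rw [← tsum_geometric_of_lt_one hq0 hq, ← tsum_mul_left]
    exact ((summable_nat_add_iff (m + 1)).mpr hsum).tsum_le_tsum
      (fun j => by rw [add_comm]; exact hgt j) ((summable_geometric_of_lt_one hq0 hq).mul_left δ)
  linarith

theorem tendsto_tsum_of_concentrating {w : ℕ → ℕ → ℝ} {ε δ : ℕ → ℝ}
    (hw : ∀ m n, 0 ≤ w m n) (hq0 : 0 ≤ q) (hq : q < 1)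
    (hlt : ∀ m, ∀ n < m, w m n ≤ ε m) (hpeak : ∀ m, w m m = 1)
    (hgt : ∀ m j, w m (m + 1 + j) ≤ δ m * q ^ j)
    (hε : Tendsto (fun m : ℕ => m * ε m) atTop (𝓝 0)) (hδ : Tendsto δ atTop (𝓝 0)) :
    Tendsto (fun m => ∑' n, w m n) atTop (𝓝 1) := by
  have hupper : Tendsto (fun m : ℕ => m * ε m + 1 + δ m * (1 - q)⁻¹) atTop (𝓝 1) := by
    simpa using (hε.add_const 1).add (hδ.mul_const (1 - q)⁻¹)
  refine tendsto_of_tendsto_of_tendsto_of_le_of_le tendsto_const_nhds hupper (fun m => ?_)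
    (fun m => tsum_le_of_peak (hw m) hq0 hq (hlt m) (hpeak m) (hgt m))
  calc (1 : ℝ) = w m m := (hpeak m).symm
    _ ≤ ∑' n, w m n :=
      (summable_of_le_geometric_tail (hw m) hq0 hq (hgt m)).le_tsum m fun n _ => hw m n

end Concentration

lemma exp_neg_mul_three_pow_le {a : ℝ} (ha : 0 ≤ a) (m : ℕ) :
    exp (-(a * 3 ^ m)) ≤ exp (-a) ^ m := by
  rw [← exp_nat_mul, exp_le_exp]
  have hm : (m : ℝ) ≤ 3 ^ m := by exact_mod_cast (Nat.lt_pow_self (by norm_num)).le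
  nlinarith

lemma tendsto_exp_neg_mul_three_pow {a : ℝ} (ha : 0 < a) :
    Tendsto (fun m : ℕ => exp (-(a * 3 ^ m))) atTop (𝓝 0) :=
  squeeze_zero (fun m => (exp_pos _).le) (exp_neg_mul_three_pow_le ha.le)
    (tendsto_pow_atTop_nhds_zero_of_lt_one (exp_pos _).le (exp_lt_one_iff.mpr (by linarith)))

lemma tendsto_natCast_mul_exp_neg_mul_three_pow {a : ℝ} (ha : 0 < a) :
    Tendsto (fun m : ℕ => m * exp (-(a * 3 ^ m))) atTop (𝓝 0) :=
  squeeze_zero (fun m => by positivity)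
    (fun m => mul_le_mul_of_nonneg_left (exp_neg_mul_three_pow_le ha.le m) m.cast_nonneg)
    (tendsto_self_mul_const_pow_of_lt_one (exp_pos _).le (exp_lt_one_iff.mpr (by linarith)))

lemma one_lt_log_three_div_log_two : 1 < log 3 / log 2 :=
  (one_lt_div (log_pos (by norm_num))).mpr (log_lt_log (by norm_num) (by norm_num))

lemma log_three_div_log_two_lt_two : log 3 / log 2 < 2 := by
  rw [div_lt_iff₀ (log_pos (by norm_num))]
  calc log 3 < log (2 ^ 2) := log_lt_log (by norm_num) (by norm_num)
    _ = 2 * log 2 := by rw [log_pow]; norm_num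

section Energy

variable {c L : ℝ}

/-- The exponent `f_m(n)` of `P_m`, written with `3 β_m = 2 c L 6^m`. -/
noncomputable def gibbsEnergy (c L : ℝ) (m n : ℕ) : ℝ :=
  2 * c * L * 6 ^ m / 2 ^ (n + 1) + c * 3 ^ n

lemma gibbsEnergy_self (c L : ℝ) (m : ℕ) :
    gibbsEnergy c L m m = c * L * 3 ^ m + c * 3 ^ m := by
  rw [gibbsEnergy, show (6 : ℝ) ^ m = 2 ^ m * 3 ^ m by rw [← mul_pow]; norm_num, pow_succ]
  field_simp

lemma gibbsEnergy_gap_of_lt (hc : 0 ≤ c) (hL : 0 ≤ L) {m n : ℕ} (hn : n < m) :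
    c * (L - 1) * 3 ^ m ≤ gibbsEnergy c L m n - gibbsEnergy c L m m := by
  have hfirst : 2 * (c * L * 3 ^ m) ≤ 2 * c * L * 6 ^ m / 2 ^ (n + 1) := by
    rw [le_div_iff₀ (by positivity)]
    calc 2 * (c * L * 3 ^ m) * 2 ^ (n + 1) ≤ 2 * (c * L * 3 ^ m) * 2 ^ m := by
          gcongr
          · norm_num
          · exact hn
      _ = 2 * c * L * (2 * 3) ^ m := by rw [mul_pow]; ring
      _ = 2 * c * L * 6 ^ m := by norm_num
  have : 0 ≤ c * 3 ^ n := by positivity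
  rw [gibbsEnergy_self, gibbsEnergy]
  linarith

lemma gibbsEnergy_gap_of_gt (hc : 0 ≤ c) (hL : 0 ≤ L) (m j : ℕ) :
    c * (2 - L) * 3 ^ m + 2 * c * j ≤ gibbsEnergy c L m (m + 1 + j) - gibbsEnergy c L m m := by
  have hfirst : 0 ≤ 2 * c * L * 6 ^ m / 2 ^ (m + 1 + j + 1) := by positivity
  have hsplit : (3 : ℝ) ^ (m + 1 + j) = 3 ^ m * 3 ^ (j + 1) := by rw [← pow_add]; ring_nf
  have hbernoulli : 3 + 2 * (j : ℝ) ≤ 3 ^ (j + 1) := by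
    have := one_add_mul_le_pow (a := (2 : ℝ)) (by norm_num) (j + 1)
    norm_num at this
    linarith
  have h3m : (1 : ℝ) ≤ 3 ^ m := one_le_pow₀ (by norm_num)
  have hexcess : 2 * (j : ℝ) ≤ 3 ^ m * (3 ^ (j + 1) - 3) := by nlinarith
  rw [gibbsEnergy_self, gibbsEnergy, hsplit]
  nlinarith [mul_le_mul_of_nonneg_left hexcess hc]

theorem tendsto_tsum_exp_neg_gibbsEnergy_gap (hc : 0 < c) (hL1 : 1 < L) (hL2 : L < 2) :
    Tendsto (fun m => ∑' n, exp (-(gibbsEnergy c L m n - gibbsEnergy c L m m)))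
      atTop (𝓝 1) := by
  refine tendsto_tsum_of_concentrating (q := exp (-(2 * c)))
    (ε := fun m => exp (-(c * (L - 1) * 3 ^ m))) (δ := fun m => exp (-(c * (2 - L) * 3 ^ m)))
    (fun m n => (exp_pos _).le) (exp_pos _).le (exp_lt_one_iff.mpr (by linarith))
    (fun m n hn => ?_) (fun m => by simp) (fun m j => ?_)
    (tendsto_natCast_mul_exp_neg_mul_three_pow (by nlinarith))
    (tendsto_exp_neg_mul_three_pow (by nlinarith))
  · rw [exp_le_exp]
    linarith [gibbsEnergy_gap_of_lt hc.le (by linarith) hn]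
  · rw [← exp_nat_mul, ← exp_add, exp_le_exp]
    linarith [gibbsEnergy_gap_of_gt hc.le (by linarith : 0 ≤ L) m j]

end Energy

theorem stmt_8 (cε : ℝ) (hc : 0 < cε) :
    Filter.Tendsto
      (fun m : ℕ =>
        Real.exp (-(3 * (cε * (2 / 3) * (Real.log 3 / Real.log 2) * 6 ^ m) / 2 ^ (m + 1))
            - cε * 3 ^ m) /
        (∑' n : ℕ,
          Real.exp (-(3 * (cε * (2 / 3) * (Real.log 3 / Real.log 2) * 6 ^ m) / 2 ^ (n + 1))
            - cε * 3 ^ n)))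
      Filter.atTop (nhds 1) := by
  set L := Real.log 3 / Real.log 2
  have henergy : ∀ m n : ℕ, -(3 * (cε * (2 / 3) * L * 6 ^ m) / 2 ^ (n + 1)) - cε * 3 ^ n
      = -gibbsEnergy cε L m n := fun m n => by rw [gibbsEnergy]; ring
  simp only [henergy, exp_neg_div_tsum_exp_neg]
  simpa using (tendsto_tsum_exp_neg_gibbsEnergy_gap hc one_lt_log_three_div_log_two
    log_three_div_log_two_lt_two).inv₀ one_ne_zero
end

section
/- With β_m and P_m as above, for every δ with 0 < δ < 1/2 there exists M such that for all m ≥ M: P_m(m) > 1/2 + δ; hence for all large m, the probability assigned to the single well m exceeds the total probability of all other wells. -/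
/-!
Writing `L = log 3 / log 2`, the energy is `f m n = cε 3^m (L 2^(m-n) + 3^(n-m))`, and since
`3/2 ≤ L ≤ 8/5` it grows at least linearly in `|n - m|` away from `n = m`, with slope
`t_m = (2/5) cε 3^m`. Comparing the Gibbs weights with `exp (-t_m |n - m|)` bounds the partition
function by `exp (-f m m) (1 + e^{-t_m}) / (1 - e^{-t_m})`, so `P m m ≥ tanh (t_m / 2) → 1`.
-/

open Real Filter Topology

lemma three_halves_le_log_three_div_log_two : 3 / 2 ≤ log 3 / log 2 := by
  rw [le_div_iff₀ (log_pos one_lt_two)]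
  have h := log_le_log (by norm_num) (show (2 : ℝ) ^ 3 ≤ 3 ^ 2 by norm_num)
  rw [log_pow, log_pow] at h
  push_cast at h
  linarith

lemma log_three_div_log_two_le_eight_fifths : log 3 / log 2 ≤ 8 / 5 := by
  rw [div_le_iff₀ (log_pos one_lt_two)]
  have h := log_le_log (by norm_num) (show (3 : ℝ) ^ 5 ≤ 2 ^ 8 by norm_num)
  rw [log_pow, log_pow] at h
  push_cast at h
  linarith

lemma add_one_add_mul_abs_le_mul_zpow_add_zpow {L : ℝ} (hL₁ : 3 / 2 ≤ L) (hL₂ : L ≤ 8 / 5)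
    (j : ℤ) : L + 1 + 2 / 5 * |(j : ℝ)| ≤ L * 2 ^ (-j) + 3 ^ j := by
  obtain ⟨k, rfl | rfl⟩ := Int.eq_nat_or_neg j <;> rcases Nat.eq_zero_or_pos k with rfl | hk
  · simp
  · have h3 := one_add_mul_le_pow (a := (2 : ℝ)) (by norm_num) k
    have hk₁ : (1 : ℝ) ≤ k := Nat.one_le_cast.2 hk
    have h2 : 0 ≤ L * ((2 : ℝ) ^ k)⁻¹ := by positivity
    norm_num at h3 ⊢
    linarith
  · simp
  · have h2 := one_add_mul_le_pow (a := (1 : ℝ)) (by norm_num) k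
    have hk₁ : (1 : ℝ) ≤ k := Nat.one_le_cast.2 hk
    have h3 : 0 ≤ ((3 : ℝ) ^ k)⁻¹ := by positivity
    norm_num at h2 ⊢
    nlinarith

lemma hasSum_pow_natAbs {r : ℝ} (hr₀ : 0 ≤ r) (hr₁ : r < 1) :
    HasSum (fun k : ℤ ↦ r ^ k.natAbs) ((1 + r) / (1 - r)) := by
  have hgeom := hasSum_geometric_of_lt_one hr₀ hr₁
  have hneg : HasSum (fun n : ℕ ↦ r ^ (-(n + 1 : ℤ)).natAbs) (r * (1 - r)⁻¹) :=
    (hgeom.mul_left r).congr_fun fun n ↦ by rw [← pow_succ']; congr 1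
  have h := HasSum.of_nat_of_neg_add_one (f := fun k : ℤ ↦ r ^ k.natAbs) hgeom hneg
  rwa [← one_add_mul, ← div_eq_mul_inv] at h

lemma one_sub_div_one_add_le_exp_neg_div_tsum (a : ℕ → ℝ) {m : ℕ} {t : ℝ} (ht : 0 < t)
    (hgap : ∀ n : ℕ, a m + t * |(n : ℝ) - m| ≤ a n) :
    (1 - exp (-t)) / (1 + exp (-t)) ≤ exp (-a m) / ∑' n, exp (-a n) := by
  set r := exp (-t)
  have hr₀ : 0 < r := exp_pos _
  have hr₁ : r < 1 := exp_lt_one_iff.2 (neg_lt_zero.2 ht)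
  have hgeom := hasSum_pow_natAbs hr₀.le hr₁
  have hinj : Function.Injective fun n : ℕ ↦ (n : ℤ) - m := fun _ _ h ↦ by simpa using h
  have hdist : Summable fun n : ℕ ↦ r ^ ((n : ℤ) - m).natAbs :=
    hgeom.summable.comp_injective hinj
  have hdom (n : ℕ) : exp (-a n) ≤ exp (-a m) * r ^ ((n : ℤ) - m).natAbs := by
    rw [← exp_nat_mul, ← exp_add, exp_le_exp, Nat.cast_natAbs]
    push_cast
    linarith [hgap n]
  have hsum : Summable fun n ↦ exp (-a n) :=
    (hdist.mul_left _).of_nonneg_of_le (fun _ ↦ (exp_pos _).le) hdom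
  have hZ : ∑' n, exp (-a n) ≤ exp (-a m) * ((1 + r) / (1 - r)) :=
    calc ∑' n, exp (-a n) ≤ ∑' n : ℕ, exp (-a m) * r ^ ((n : ℤ) - m).natAbs :=
          hsum.tsum_le_tsum hdom (hdist.mul_left _)
      _ = exp (-a m) * ∑' n : ℕ, r ^ ((n : ℤ) - m).natAbs := tsum_mul_left
      _ ≤ exp (-a m) * ((1 + r) / (1 - r)) := by
          gcongr
          exact (tsum_comp_le_tsum_of_inj hgeom.summable (fun _ ↦ by positivity) hinj).trans_eq
            hgeom.tsum_eq
  have hZ₀ : 0 < ∑' n, exp (-a n) := hsum.tsum_pos (fun _ ↦ (exp_pos _).le) m (exp_pos _)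
  calc (1 - r) / (1 + r) = exp (-a m) / (exp (-a m) * ((1 + r) / (1 - r))) := by
        field_simp
    _ ≤ exp (-a m) / ∑' n, exp (-a n) := by gcongr

lemma tendsto_one_sub_exp_neg_div_one_add_exp_neg :
    Tendsto (fun t ↦ (1 - exp (-t)) / (1 + exp (-t))) atTop (𝓝 1) := by
  have h := tendsto_exp_neg_atTop_nhds_zero
  have := (tendsto_const_nhds (x := (1 : ℝ))).sub h |>.div
    (tendsto_const_nhds.add h) (by norm_num : (1 : ℝ) + 0 ≠ 0)
  rwa [sub_zero, add_zero, div_one] at this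

theorem stmt_9 (cε : ℝ) (hc : 0 < cε)
    (β : ℕ → ℝ) (hβ : ∀ m, β m = cε * (2 / 3) * (Real.log 3 / Real.log 2) * 6 ^ m)
    (f : ℕ → ℕ → ℝ) (hf : ∀ m n, f m n = 3 * β m / 2 ^ (n + 1) + cε * 3 ^ n)
    (P : ℕ → ℕ → ℝ)
    (hP : ∀ m n, P m n = Real.exp (-f m n) / (∑' k : ℕ, Real.exp (-f m k))) :
    ∀ δ : ℝ, 0 < δ → δ < 1 / 2 →
      ∃ M : ℕ, ∀ m : ℕ, M ≤ m → P m m > 1 / 2 + δ := by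
  intro δ _ hδ
  set L := log 3 / log 2
  have hf_eq (m n : ℕ) : f m n = cε * 3 ^ m * (L * 2 ^ (-((n : ℤ) - m)) + 3 ^ ((n : ℤ) - m)) := by
    rw [hf, hβ, neg_sub, zpow_sub₀ two_ne_zero, zpow_sub₀ three_ne_zero]
    simp only [zpow_natCast]
    rw [show (6 : ℝ) = 2 * 3 by norm_num, mul_pow, pow_succ]
    field_simp
  have hgap (m n : ℕ) : f m m + 2 / 5 * cε * 3 ^ m * |(n : ℝ) - m| ≤ f m n := by
    have h := mul_le_mul_of_nonneg_left (add_one_add_mul_abs_le_mul_zpow_add_zpow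
      three_halves_le_log_three_div_log_two log_three_div_log_two_le_eight_fifths ((n : ℤ) - m))
      (by positivity : 0 ≤ cε * 3 ^ m)
    rw [hf_eq, hf_eq, sub_self, neg_zero, zpow_zero, zpow_zero]
    push_cast at h
    linarith
  have hlower (m : ℕ) :
      (1 - exp (-(2 / 5 * cε * 3 ^ m))) / (1 + exp (-(2 / 5 * cε * 3 ^ m))) ≤ P m m :=
    hP m m ▸ one_sub_div_one_add_le_exp_neg_div_tsum (f m) (by positivity) (hgap m)
  have hlim := tendsto_one_sub_exp_neg_div_one_add_exp_neg.comp
    ((tendsto_pow_atTop_atTop_of_one_lt (by norm_num : (1 : ℝ) < 3)).const_mul_atTop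
      (by positivity : 0 < 2 / 5 * cε))
  obtain ⟨M, hM⟩ := eventually_atTop.1 ((tendsto_order.1 hlim).1 (1 / 2 + δ) (by linarith))
  exact ⟨M, fun m hm ↦ (hM m hm).trans_le (hlower m)⟩
end

section
/- With P_m as above, the sequence of probabilities Q_m = Σ_{n even} P_m(n) (probability of an even well, i.e. ferromagnetic) does not converge as m → ∞: along even m it tends to 1 and along odd m it tends to 0. -/
/-!
Writing `L = log 3 / log 2 ∈ [1, 2]`, the energy is `f m n = c (L 6^m / 2^n + 3^n)`, a discrete
well centred at `n = m`: each step away from `m` raises the energy by at least `c 3^m / 3`.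
Hence the Gibbs weights off the bottom of the well are dominated by a two-sided geometric
series of ratio `exp (-c 3^m / 3) → 0`, so `P m` concentrates on `n = m`, and `Q m` tends to
`1` or `0` according to the parity of `m`.
-/

open Real Filter Topology

theorem add_mul_dist_le_of_steps {E : ℕ → ℝ} {m : ℕ} {δ : ℝ}
    (hup : ∀ n, m ≤ n → E n + δ ≤ E (n + 1))
    (hdown : ∀ n, n < m → E (n + 1) + δ ≤ E n) (n : ℕ) :
    E m + δ * Nat.dist n m ≤ E n := by
  rcases le_total m n with hmn | hnm
  · obtain ⟨k, rfl⟩ := Nat.exists_eq_add_of_le hmn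
    rw [Nat.dist_eq_sub_of_le_right hmn, Nat.add_sub_cancel_left]
    clear hdown hmn
    induction k with
    | zero => simp
    | succ k ih =>
      have := hup (m + k) (Nat.le_add_right m k)
      rw [← add_assoc]
      push_cast
      linarith
  · obtain ⟨k, rfl⟩ := Nat.exists_eq_add_of_le hnm
    rw [Nat.dist_eq_sub_of_le hnm, Nat.add_sub_cancel_left]
    clear hup hnm
    induction k generalizing n with
    | zero => simp
    | succ k ih =>
      have := ih (n + 1) (fun j hj => hdown j (by omega))
      have := hdown n (by omega)
      rw [show n + 1 + k = n + (k + 1) by omega] at *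
      push_cast at *
      linarith

theorem summable_pow_dist {r : ℝ} (h0 : 0 ≤ r) (h1 : r < 1) (m : ℕ) :
    Summable fun n => r ^ Nat.dist n m := by
  refine (summable_nat_add_iff m).1 ?_
  simpa [Nat.dist_eq_sub_of_le_right] using summable_geometric_of_lt_one h0 h1

theorem tsum_pow_dist_le {r : ℝ} (h0 : 0 ≤ r) (h1 : r < 1) (m : ℕ) :
    ∑' n, r ^ Nat.dist n m ≤ (1 + r) / (1 - r) := by
  have hgeom := summable_geometric_of_lt_one h0 h1
  have hleft : ∑ i ∈ Finset.range m, r ^ Nat.dist i m ≤ r / (1 - r) :=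
    calc ∑ i ∈ Finset.range m, r ^ Nat.dist i m = r * ∑ j ∈ Finset.range m, r ^ j := by
          rw [Finset.mul_sum, ← Finset.sum_range_reflect]
          refine Finset.sum_congr rfl fun i hi => ?_
          rw [Finset.mem_range] at hi
          rw [Nat.dist_eq_sub_of_le (by omega), ← pow_succ']
          congr 1
          omega
      _ ≤ r * ∑' j, r ^ j := by
          gcongr
          exact hgeom.sum_le_tsum _ fun j _ => by positivity
      _ = r / (1 - r) := by rw [tsum_geometric_of_lt_one h0 h1, div_eq_mul_inv]
  have hright : ∑' k, r ^ Nat.dist (k + m) m = 1 / (1 - r) := by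
    simp [Nat.dist_eq_sub_of_le_right, tsum_geometric_of_lt_one h0 h1]
  rw [← (summable_pow_dist h0 h1 m).sum_add_tsum_nat_add m, hright, add_div]
  linarith

noncomputable def gibbs (E : ℕ → ℝ) (n : ℕ) : ℝ := exp (-E n) / ∑' k, exp (-E k)

theorem gibbs_nonneg (E : ℕ → ℝ) (n : ℕ) : 0 ≤ gibbs E n :=
  div_nonneg (exp_pos _).le (tsum_nonneg fun _ => (exp_pos _).le)

section Gibbs

variable {E : ℕ → ℝ}

theorem summable_gibbs (hE : Summable fun n => exp (-E n)) : Summable (gibbs E) :=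
  hE.div_const _

theorem tsum_gibbs (hE : Summable fun n => exp (-E n)) : ∑' n, gibbs E n = 1 := by
  unfold gibbs
  rw [tsum_div_const]
  exact div_self (hE.tsum_pos (fun _ => (exp_pos _).le) 0 (exp_pos _)).ne'

theorem gibbs_le_one (hE : Summable fun n => exp (-E n)) (m : ℕ) : gibbs E m ≤ 1 :=
  tsum_gibbs hE ▸ (summable_gibbs hE).le_tsum m fun n _ => gibbs_nonneg E n

variable {p : ℕ → Prop} [DecidablePred p]

theorem summable_ite_gibbs (hE : Summable fun n => exp (-E n)) :
    Summable fun n => if p n then gibbs E n else 0 :=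
  (summable_gibbs hE).of_nonneg_of_le (fun n => by split_ifs <;> simp [gibbs_nonneg])
    (fun n => by split_ifs <;> simp [gibbs_nonneg])

theorem tsum_ite_gibbs_nonneg : 0 ≤ ∑' n, if p n then gibbs E n else 0 :=
  tsum_nonneg fun n => by split_ifs <;> simp [gibbs_nonneg]

theorem gibbs_le_tsum_ite (hE : Summable fun n => exp (-E n)) {m : ℕ} (hm : p m) :
    gibbs E m ≤ ∑' n, if p n then gibbs E n else 0 := by
  simpa [hm] using (summable_ite_gibbs (p := p) hE).le_tsum m fun n _ => by
    split_ifs <;> simp [gibbs_nonneg]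

theorem tsum_ite_gibbs_le_one_sub (hE : Summable fun n => exp (-E n)) {m : ℕ} (hm : ¬p m) :
    ∑' n, (if p n then gibbs E n else 0) ≤ 1 - gibbs E m := by
  have hsingle : Summable fun n => if n = m then gibbs E m else 0 :=
    summable_of_ne_finset_zero (s := {m}) fun n hn => by simp_all
  rw [← tsum_gibbs hE, ← tsum_ite_eq m fun _ => gibbs E m,
    ← (summable_gibbs hE).tsum_sub hsingle]
  refine (summable_ite_gibbs hE).tsum_le_tsum (fun n => ?_) ((summable_gibbs hE).sub hsingle)
  split_ifs <;> simp_all [gibbs_nonneg]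

theorem tsum_ite_gibbs_le_one (hE : Summable fun n => exp (-E n)) :
    ∑' n, (if p n then gibbs E n else 0) ≤ 1 :=
  tsum_gibbs hE ▸ (summable_ite_gibbs hE).tsum_le_tsum
    (fun n => by split_ifs <;> simp [gibbs_nonneg]) (summable_gibbs hE)

theorem exp_neg_le_of_well {m n : ℕ} {δ : ℝ} (h : E m + δ * Nat.dist n m ≤ E n) :
    exp (-E n) ≤ exp (-E m) * exp (-δ) ^ Nat.dist n m := by
  rw [← exp_nat_mul, ← exp_add]
  exact exp_le_exp.2 (by linarith)

variable {m : ℕ} {δ : ℝ}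

theorem summable_exp_neg_of_well (hδ : 0 < δ) (hwell : ∀ n, E m + δ * Nat.dist n m ≤ E n) :
    Summable fun n => exp (-E n) :=
  ((summable_pow_dist (exp_pos _).le (exp_lt_one_iff.2 (neg_neg_of_pos hδ)) m).mul_left _
    ).of_nonneg_of_le (fun _ => (exp_pos _).le) fun n => exp_neg_le_of_well (hwell n)

theorem gibbs_self_ge_of_well (hδ : 0 < δ) (hwell : ∀ n, E m + δ * Nat.dist n m ≤ E n) :
    (1 - exp (-δ)) / (1 + exp (-δ)) ≤ gibbs E m := by
  set r := exp (-δ)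
  have hr0 : 0 ≤ r := (exp_pos _).le
  have hr1 : r < 1 := exp_lt_one_iff.2 (neg_neg_of_pos hδ)
  have hZ : ∑' n, exp (-E n) ≤ exp (-E m) * ((1 + r) / (1 - r)) :=
    calc ∑' n, exp (-E n) ≤ ∑' n, exp (-E m) * r ^ Nat.dist n m :=
          (summable_exp_neg_of_well hδ hwell).tsum_le_tsum
            (fun n => exp_neg_le_of_well (hwell n)) ((summable_pow_dist hr0 hr1 m).mul_left _)
      _ ≤ exp (-E m) * ((1 + r) / (1 - r)) := by
          rw [tsum_mul_left]
          exact mul_le_mul_of_nonneg_left (tsum_pow_dist_le hr0 hr1 m) (exp_pos _).le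
  calc (1 - r) / (1 + r) = exp (-E m) / (exp (-E m) * ((1 + r) / (1 - r))) := by
        field_simp [(sub_pos.2 hr1).ne']
    _ ≤ gibbs E m := div_le_div_of_nonneg_left (exp_pos _).le
        ((summable_exp_neg_of_well hδ hwell).tsum_pos (fun _ => (exp_pos _).le) m (exp_pos _)) hZ

end Gibbs

theorem tendsto_gibbs_self_of_well {E : ℕ → ℕ → ℝ} {δ : ℕ → ℝ} (hδ : Tendsto δ atTop atTop)
    (hwell : ∀ m n, E m m + δ m * Nat.dist n m ≤ E m n) :
    Tendsto (fun m => gibbs (E m) m) atTop (𝓝 1) := by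
  have hr : Tendsto (fun m => exp (-δ m)) atTop (𝓝 0) :=
    tendsto_exp_atBot.comp (tendsto_neg_atTop_atBot.comp hδ)
  have hlower : Tendsto (fun m => (1 - exp (-δ m)) / (1 + exp (-δ m))) atTop (𝓝 1) := by
    have := (tendsto_const_nhds (x := (1 : ℝ))).sub hr |>.div
      ((tendsto_const_nhds (x := (1 : ℝ))).add hr) (by norm_num)
    rwa [sub_zero, add_zero, div_one] at this
  have hpos : ∀ᶠ m in atTop, 0 < δ m := hδ.eventually_gt_atTop 0
  refine tendsto_of_tendsto_of_tendsto_of_le_of_le' hlower tendsto_const_nhds ?_ ?_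
  · filter_upwards [hpos] with m hm using gibbs_self_ge_of_well hm (hwell m)
  · filter_upwards [hpos] with m hm using
      gibbs_le_one (summable_exp_neg_of_well hm (hwell m)) m

section DoubleWell

variable {c a : ℝ} {m n : ℕ}

theorem energy_add_le_energy_succ (hc : 0 ≤ c) (ha : a ≤ 2 * 6 ^ m) (hn : m ≤ n) :
    c * (a / 2 ^ n + 3 ^ n) + c * 3 ^ m / 3 ≤ c * (a / 2 ^ (n + 1) + 3 ^ (n + 1)) := by
  have hsplit : a / 2 ^ n = 2 * (a / 2 ^ (n + 1)) := by field_simp; ring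
  have hx : a / 2 ^ (n + 1) ≤ 3 ^ n := by
    rw [div_le_iff₀ (by positivity)]
    calc a ≤ 2 * 6 ^ m := ha
      _ ≤ 2 * 6 ^ n := by gcongr; norm_num
      _ = 3 ^ n * 2 ^ (n + 1) := by rw [show (6 : ℝ) = 3 * 2 by norm_num, mul_pow]; ring
  have h3 : (3 : ℝ) ^ m ≤ 3 ^ n := pow_le_pow_right₀ (by norm_num) hn
  have key : a / 2 ^ (n + 1) + 3 ^ m / 3 ≤ 2 * 3 ^ n := by
    linarith [pow_nonneg (zero_le_three (α := ℝ)) n]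
  rw [hsplit, pow_succ 3 n]
  linear_combination mul_le_mul_of_nonneg_left key hc

theorem energy_succ_add_le_energy (hc : 0 ≤ c) (ha : 6 ^ m ≤ a) (hn : n < m) :
    c * (a / 2 ^ (n + 1) + 3 ^ (n + 1)) + c * 3 ^ m / 3 ≤ c * (a / 2 ^ n + 3 ^ n) := by
  have hsplit : a / 2 ^ n = 2 * (a / 2 ^ (n + 1)) := by field_simp; ring
  have hx : 3 ^ m ≤ a / 2 ^ (n + 1) := by
    rw [le_div_iff₀ (by positivity)]
    calc 3 ^ m * 2 ^ (n + 1) ≤ (3 : ℝ) ^ m * 2 ^ m := by gcongr; norm_num; exact hn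
      _ = 6 ^ m := by rw [← mul_pow]; norm_num
      _ ≤ a := ha
  have h3 : (3 : ℝ) ^ (n + 1) ≤ 3 ^ m := pow_le_pow_right₀ (by norm_num) hn
  have key : 2 * 3 ^ n + 3 ^ m / 3 ≤ a / 2 ^ (n + 1) := by rw [pow_succ] at h3; linarith
  rw [hsplit, pow_succ 3 n]
  linear_combination mul_le_mul_of_nonneg_left key hc

end DoubleWell

theorem stmt_10 (cε : ℝ) (hc : 0 < cε)
    (β : ℕ → ℝ) (hβ : ∀ m, β m = cε * (2 / 3) * (Real.log 3 / Real.log 2) * 6 ^ m)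
    (f : ℕ → ℕ → ℝ) (hf : ∀ m n, f m n = 3 * β m / 2 ^ (n + 1) + cε * 3 ^ n)
    (P : ℕ → ℕ → ℝ)
    (hP : ∀ m n, P m n = Real.exp (-f m n) / (∑' k : ℕ, Real.exp (-f m k)))
    (Q : ℕ → ℝ) (hQ : ∀ m, Q m = ∑' n : ℕ, if Even n then P m n else 0) :
    Filter.Tendsto (fun m : ℕ => Q (2 * m)) Filter.atTop (nhds 1) ∧
    Filter.Tendsto (fun m : ℕ => Q (2 * m + 1)) Filter.atTop (nhds 0) ∧
    ¬ ∃ L : ℝ, Filter.Tendsto Q Filter.atTop (nhds L) := by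
  set L := log 3 / log 2
  have hlog2 : 0 < log 2 := log_pos one_lt_two
  have hL₁ : 1 ≤ L := by
    rw [le_div_iff₀ hlog2, one_mul]; exact log_le_log two_pos (by norm_num)
  have hL₂ : L ≤ 2 := by
    rw [div_le_iff₀ hlog2, ← log_rpow two_pos]; exact log_le_log (by norm_num) (by norm_num)
  have hfE : ∀ m n, f m n = cε * (L * 6 ^ m / 2 ^ n + 3 ^ n) := fun m n => by
    rw [hf, hβ]; field_simp; ring
  have hwell : ∀ m n, f m m + cε * 3 ^ m / 3 * Nat.dist n m ≤ f m n := fun m =>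
    add_mul_dist_le_of_steps
      (fun n hn => by
        simp only [hfE]
        exact energy_add_le_energy_succ hc.le (by gcongr) hn)
      (fun n hn => by
        simp only [hfE]
        exact energy_succ_add_le_energy hc.le (le_mul_of_one_le_left (by positivity) hL₁) hn)
  have hδ : Tendsto (fun m : ℕ => cε * 3 ^ m / 3) atTop atTop :=
    ((tendsto_pow_atTop_atTop_of_one_lt (by norm_num : (1 : ℝ) < 3)).const_mul_atTop
      hc).atTop_div_const (by norm_num)
  have hsum : ∀ m, Summable fun n => exp (-f m n) := fun m =>
    summable_exp_neg_of_well (by positivity) (hwell m)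
  have hPg : P = fun m => gibbs (f m) := funext₂ hP
  have hQg : Q = fun m => ∑' n : ℕ, if Even n then gibbs (f m) n else 0 := funext fun m => by
    rw [hQ, hPg]
  have hconc := tendsto_gibbs_self_of_well hδ hwell
  have h₀ : Tendsto (fun m : ℕ => 2 * m) atTop atTop := tendsto_id.const_mul_atTop' two_pos
  have h₁ : Tendsto (fun m : ℕ => 2 * m + 1) atTop atTop := (tendsto_add_atTop_nat 1).comp h₀
  have heven : Tendsto (fun m : ℕ => Q (2 * m)) atTop (𝓝 1) := by
    rw [hQg]
    exact tendsto_of_tendsto_of_tendsto_of_le_of_le (hconc.comp h₀) tendsto_const_nhds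
      (fun m => gibbs_le_tsum_ite (hsum _) (even_two_mul m))
      (fun m => tsum_ite_gibbs_le_one (hsum _))
  have hodd : Tendsto (fun m : ℕ => Q (2 * m + 1)) atTop (𝓝 0) := by
    rw [hQg]
    refine tendsto_of_tendsto_of_tendsto_of_le_of_le tendsto_const_nhds ?_
      (fun _ => tsum_ite_gibbs_nonneg)
      (fun m => tsum_ite_gibbs_le_one_sub (hsum _) (Nat.not_even_two_mul_add_one m))
    simpa using (tendsto_const_nhds (x := (1 : ℝ))).sub (hconc.comp h₁)
  refine ⟨heven, hodd, fun ⟨l, hl⟩ => one_ne_zero (α := ℝ) ?_⟩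
  exact (tendsto_nhds_unique (hl.comp h₀) heven).symm.trans
    (tendsto_nhds_unique (hl.comp h₁) hodd)
end

section
/- Let g_β(n) = 3β/2^(n+1) − log(ε_n − ε_{n+2}) (the exact free energy with nested wells, ε_n = ε^(3^n)) and f̃_β(n) = 3β/2^(n+1) + c_ε·3^n with c_ε = −log ε. Then |g_β(n) − f̃_β(n)| ≤ −log(1 − ε^8) for all n ≥ 1 and all β, i.e. the two free energies differ by a constant depending only on ε. -/
theorem stmt_13 (ε : ℝ) (hε0 : 0 < ε) (hε1 : ε < 1) (β : ℝ) (hβ : 0 < β)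
    (g ftil : ℕ → ℝ)
    (hg : ∀ n, g n = 3 * β / 2 ^ (n + 1) - Real.log (ε ^ 3 ^ n - ε ^ 3 ^ (n + 2)))
    (hftil : ∀ n, ftil n = 3 * β / 2 ^ (n + 1) + (-Real.log ε) * 3 ^ n) :
    ∀ n : ℕ, 1 ≤ n → |g n - ftil n| ≤ -Real.log (1 - ε ^ 8) := by
  intro n hn
  have hεlt : ε ^ (8 * 3 ^ n) < 1 :=
    pow_lt_one₀ hε0.le hε1 (by positivity)
  have hεpos : (0:ℝ) < ε ^ (8 * 3 ^ n) := by positivity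
  have hexp : 3 ^ (n + 2) = 3 ^ n + 8 * 3 ^ n := by ring
  have hfac : ε ^ 3 ^ n - ε ^ 3 ^ (n + 2) = ε ^ 3 ^ n * (1 - ε ^ (8 * 3 ^ n)) := by
    rw [mul_sub, mul_one, ← pow_add, hexp]
  have h1 : (0:ℝ) < 1 - ε ^ (8 * 3 ^ n) := by linarith
  have hlog : Real.log (ε ^ 3 ^ n - ε ^ 3 ^ (n + 2))
      = (3 ^ n : ℕ) * Real.log ε + Real.log (1 - ε ^ (8 * 3 ^ n)) := by
    rw [hfac, Real.log_mul (by positivity) (ne_of_gt h1), Real.log_pow]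
  have hdiff : g n - ftil n = -Real.log (1 - ε ^ (8 * 3 ^ n)) := by
    rw [hg, hftil, hlog]
    push_cast
    ring
  rw [hdiff]
  have hnneg : 0 ≤ -Real.log (1 - ε ^ (8 * 3 ^ n)) := by
    have := Real.log_nonpos h1.le (by linarith)
    linarith
  rw [abs_of_nonneg hnneg]
  have hle : ε ^ (8 * 3 ^ n) ≤ ε ^ 8 := by
    apply pow_le_pow_of_le_one hε0.le hε1.le
    nlinarith [Nat.one_le_two_pow (n := n), Nat.one_le_pow n 3 (by norm_num)]
  have h8 : (0:ℝ) < 1 - ε ^ 8 := by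
    have : ε ^ 8 < 1 := pow_lt_one₀ hε0.le hε1 (by norm_num)
    linarith
  have : Real.log (1 - ε ^ 8) ≤ Real.log (1 - ε ^ (8 * 3 ^ n)) :=
    Real.log_le_log h8 (by linarith)
  linarith
end
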